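/- arXiv:2304.08397 — 2 statements merged into one kernel-verified Lean document; each statement's English description precedes it below -/
import Mathlib

section
/- Suppose C, C' ∈ C_t(n,k) are equivalent codes (i.e., C' = ρ(C) for some monomial transformation ρ of F_q^n) and neither is isolated. Then C and C' belong to the same connected component of the graph Λ_t(n,k). -/
open Finset

variable (F : Type) [Field F] [Fintype F] [DecidableEq F]

/-- The dual code of a linear code `C ⊆ F^n`, with respect to the standard bilinear form. -/
def dualCode (n : ℕ) (C : Submodule F (Fin n → F)) : Submodule F (Fin n → F) where
  carrier := {v | ∀ c ∈ C, ∑ i, v i * c i = 0}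
  zero_mem' := by intro c _; simp
  add_mem' := by
    intro a b ha hb c hc
    simp only [Set.mem_setOf_eq] at *
    simp [add_mul, Finset.sum_add_distrib, ha c hc, hb c hc]
  smul_mem' := by
    intro r a ha c hc
    simp only [Set.mem_setOf_eq] at *
    simp [smul_eq_mul, mul_assoc, ← Finset.mul_sum, ha c hc]

/-- `goodCode F n t k C` says that `C` is an `[n,k]`-linear code over `F` whose dual minimum
distance is at least `t+1`, i.e. `C ∈ C_t(n,k)`. -/
def goodCode (n t k : ℕ) (C : Submodule F (Fin n → F)) : Prop :=
  Module.finrank F C = k ∧ ∀ v ∈ dualCode F n C, v ≠ 0 → t + 1 ≤ hammingNorm v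

/-- The Grassmann graph `Δ_t(n,k)` of codes in `C_t(n,k)`: two codes are adjacent iff
their intersection has dimension `k-1`. -/
def deltaGraph (n t k : ℕ) : SimpleGraph {C : Submodule F (Fin n → F) // goodCode F n t k C} where
  Adj X Y := X ≠ Y ∧ Module.finrank F ↥(X.1 ⊓ Y.1) = k - 1
  symm := by
    constructor
    rintro X Y ⟨h1, h2⟩
    exact ⟨h1.symm, by rwa [inf_comm]⟩
  loopless := by constructor; rintro X ⟨h1, _⟩; exact h1 rfl

/-- The graph `Λ_t(n,k)` of codes in `C_t(n,k)`: two codes are adjacent iff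
their intersection belongs to `C_t(n,k-1)`. -/
def lambdaGraph (n t k : ℕ) : SimpleGraph {C : Submodule F (Fin n → F) // goodCode F n t k C} where
  Adj X Y := X ≠ Y ∧ goodCode F n t (k-1) (X.1 ⊓ Y.1)
  symm := by
    constructor
    rintro X Y ⟨h1, h2⟩
    exact ⟨h1.symm, by rwa [inf_comm]⟩
  loopless := by constructor; rintro X ⟨h1, _⟩; exact h1 rfl

/-- A code `C ∈ C_t(n,k)` is isolated if no `(k-1)`-dimensional subspace of `C`
belongs to `C_t(n,k-1)`. -/
def IsIsolated (n t k : ℕ) (C : Submodule F (Fin n → F)) : Prop :=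
  ∀ D : Submodule F (Fin n → F), D ≤ C → ¬ goodCode F n t (k-1) D

/-- A monomial transformation of `F^n`: a permutation of the coordinates composed with
multiplication of each coordinate by a nonzero scalar. -/
def IsMonomial (n : ℕ) (ρ : (Fin n → F) ≃ₗ[F] (Fin n → F)) : Prop :=
  ∃ (σ : Equiv.Perm (Fin n)) (d : Fin n → F),
    (∀ i, d i ≠ 0) ∧ ∀ (v : Fin n → F) (i : Fin n), ρ v i = d i * v (σ i)

/-- `S_s(Ω)`: the set of points (`1`-dimensional subspaces) of `PG(k-1,q)` lying on a subspace
spanned by `s+1` points of `Ω`. (We represent any subspace by the corresponding submodule of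
`F^k`, and points of `PG(k-1,q)` by `1`-dimensional submodules.) -/
def satPoints (k s : ℕ) (Ω : Set (Submodule F (Fin k → F))) : Set (Submodule F (Fin k → F)) :=
  {P | ∃ T : Finset (Submodule F (Fin k → F)), ↑T ⊆ Ω ∧ T.card = s + 1 ∧ P ≤ T.sup id}

/-- A set `Ω` of points of `PG(k-1,q)` is `s`-saturating if `S_s(Ω)` is the whole point set of
`PG(k-1,q)` while (for `s ≥ 1`) `S_{s-1}(Ω)` is not. -/
def IsSaturating (k s : ℕ) (Ω : Set (Submodule F (Fin k → F))) : Prop :=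
  (∀ P : Submodule F (Fin k → F), Module.finrank F P = 1 → P ∈ satPoints F k s Ω) ∧
  (1 ≤ s → ¬ ∀ P : Submodule F (Fin k → F), Module.finrank F P = 1 → P ∈ satPoints F k (s-1) Ω)

/-!
Every monomial map is a product of transpositions of two coordinates and rescalings of a single
coordinate, and each of these elementary maps `g` moves every vector along one fixed line `K ∙ u`.
Monomial maps preserve each `C_t(n,m)`, hence also non-isolatedness, so it suffices to connect `C`
with `g C` for a single elementary `g`. Pick a subcode `D ≤ C` in `C_t(n,k-1)` and a `g`-stable
`k`-dimensional code `X ⊇ D`: `X = C` if `u ∈ C`, and `X = D ⊔ K ∙ u` otherwise. Enlarging a code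
shrinks its dual, so `X ∈ C_t(n,k)`. Now `C` and `X` share the subcode `D`, while `X` and `g C`
share `g D`, which is again in `C_t(n,k-1)`; hence `C`, `X`, `g C` lie on a path in `Λ_t(n,k)`.
-/

section MonomialGenerators

variable {ι R : Type*}

theorem hammingNorm_comp_perm {β : Type*} [Fintype ι] [DecidableEq β] [Zero β]
    (x : ι → β) (σ : Equiv.Perm ι) : hammingNorm (x ∘ σ) = hammingNorm x :=
  Finset.card_equiv σ (by simp)

section CommSemiring

variable [CommSemiring R]

def diagonalAut : (ι → Rˣ) →* ((ι → R) ≃ₗ[R] (ι → R)) where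
  toFun d := LinearEquiv.piCongrRight fun i => LinearEquiv.smulOfUnit (d i)
  map_one' := by ext v i; exact one_smul Rˣ (v i)
  map_mul' d e := by ext v i; exact mul_smul (d i) (e i) (v i)

@[simp]
theorem diagonalAut_apply (d : ι → Rˣ) (v : ι → R) (i : ι) : diagonalAut d v i = d i * v i :=
  rfl

variable (R) in
def permAut : Equiv.Perm ι →* ((ι → R) ≃ₗ[R] (ι → R)) where
  toFun σ := LinearEquiv.funCongrLeft R R σ.symm
  map_one' := rfl
  map_mul' _ _ := rfl

@[simp]
theorem permAut_apply (σ : Equiv.Perm ι) (v : ι → R) (i : ι) : permAut R σ v i = v (σ.symm i) :=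
  rfl

end CommSemiring

variable [CommRing R] [DecidableEq ι]

theorem diagonalAut_mulSingle_sub (j : ι) (a : Rˣ) (v : ι → R) :
    diagonalAut (Pi.mulSingle j a) v - v = ((a - 1) * v j) • Pi.single j 1 := by
  ext i
  rcases eq_or_ne i j with rfl | hij
  · simp [sub_one_mul]
  · simp [hij]

theorem permAut_swap_sub (x y : ι) (v : ι → R) :
    permAut R (Equiv.swap x y) v - v = (v y - v x) • (Pi.single x 1 - Pi.single y 1) := by
  ext i
  rcases eq_or_ne i x with rfl | hix
  · rcases eq_or_ne i y with rfl | hiy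
    · simp
    · simp [hiy]
  · rcases eq_or_ne i y with rfl | hiy
    · simp [hix]
    · simp [hix, hiy, Equiv.swap_apply_of_ne_of_ne hix hiy]

end MonomialGenerators

section MonomialMaps

variable {K : Type} [Field K] {n : ℕ}

theorem isMonomial_diagonalAut (d : Fin n → Kˣ) : IsMonomial K n (diagonalAut d) :=
  ⟨1, fun i => d i, fun i => (d i).ne_zero, fun _ _ => rfl⟩

theorem isMonomial_permAut (σ : Equiv.Perm (Fin n)) : IsMonomial K n (permAut K σ) :=
  ⟨σ.symm, 1, fun _ => one_ne_zero, fun _ _ => (one_mul _).symm⟩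

theorem IsMonomial.exists_eq_diagonalAut_mul_permAut {ρ : (Fin n → K) ≃ₗ[K] (Fin n → K)}
    (hρ : IsMonomial K n ρ) : ∃ d σ, ρ = diagonalAut d * permAut K σ := by
  obtain ⟨σ, d, hd, hρ⟩ := hρ
  refine ⟨fun i => Units.mk0 (d i) (hd i), σ.symm, ?_⟩
  ext v i
  simp [hρ]

variable (K n) in
def monomialSubmonoid : Submonoid ((Fin n → K) ≃ₗ[K] (Fin n → K)) where
  carrier := {ρ | IsMonomial K n ρ}
  mul_mem' := by
    rintro ρ₁ ρ₂ ⟨σ₁, d₁, hd₁, hρ₁⟩ ⟨σ₂, d₂, hd₂, hρ₂⟩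
    refine ⟨σ₁.trans σ₂, fun i => d₁ i * d₂ (σ₁ i), fun i => mul_ne_zero (hd₁ i) (hd₂ _),
      fun v i => ?_⟩
    simp [hρ₁, hρ₂, mul_assoc]
  one_mem' := ⟨1, 1, fun _ => one_ne_zero, fun _ _ => (one_mul _).symm⟩

variable (K n) in
def elementaryMonomials : Set ((Fin n → K) ≃ₗ[K] (Fin n → K)) :=
  {g | IsMonomial K n g ∧ ∃ u, ∀ v, g v - v ∈ K ∙ u}

theorem IsMonomial.mem_closure_elementaryMonomials {ρ : (Fin n → K) ≃ₗ[K] (Fin n → K)}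
    (hρ : IsMonomial K n ρ) : ρ ∈ Submonoid.closure (elementaryMonomials K n) := by
  obtain ⟨d, σ, rfl⟩ := hρ.exists_eq_diagonalAut_mul_permAut
  refine mul_mem ?_ ?_
  · change d ∈ (Submonoid.closure _).comap diagonalAut
    rw [← Finset.univ_prod_mulSingle d]
    exact Submonoid.prod_mem _ fun j _ => Submonoid.subset_closure ⟨isMonomial_diagonalAut _,
      Pi.single j 1, fun v => Submodule.mem_span_singleton.2
        ⟨_, (diagonalAut_mulSingle_sub j (d j) v).symm⟩⟩
  · change σ ∈ (Submonoid.closure _).comap (permAut K)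
    have hσ : σ ∈ Submonoid.closure {τ : Equiv.Perm (Fin n) | τ.IsSwap} := by
      simp [Equiv.Perm.mclosure_isSwap]
    refine Submonoid.closure_le.2 ?_ hσ
    rintro _ ⟨x, y, -, rfl⟩
    exact Submonoid.subset_closure ⟨isMonomial_permAut _, Pi.single x 1 - Pi.single y 1,
      fun v => Submodule.mem_span_singleton.2 ⟨_, (permAut_swap_sub x y v).symm⟩⟩

end MonomialMaps

section Codes

variable {K : Type} [Field K] [DecidableEq K] {n t k : ℕ}

theorem goodCode_map_of_isMonomial {m : ℕ} {ρ : (Fin n → K) ≃ₗ[K] (Fin n → K)}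
    (hρ : IsMonomial K n ρ) {C : Submodule K (Fin n → K)} (hC : goodCode K n t m C) :
    goodCode K n t m (C.map ρ.toLinearMap) := by
  obtain ⟨σ, d, hd, hρ⟩ := hρ
  refine ⟨(LinearEquiv.finrank_map_eq ρ C).trans hC.1, fun v hv hv0 => ?_⟩
  -- `w = ρᵀ v`
  set w : Fin n → K := (fun i => d i * v i) ∘ σ.symm
  have hw : w ∈ dualCode K n C := fun c hc =>
    calc ∑ j, w j * c j = ∑ i, w (σ i) * c (σ i) := (Equiv.sum_comp σ _).symm
      _ = ∑ i, v i * ρ c i := by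
        simp only [w, hρ, Function.comp_apply, σ.symm_apply_apply, mul_assoc, mul_left_comm]
      _ = 0 := hv _ ⟨c, hc, rfl⟩
  have hnorm : hammingNorm w = hammingNorm v := by
    rw [hammingNorm_comp_perm]
    exact hammingNorm_comp (fun i => (d i * ·)) (fun i => mul_right_injective₀ (hd i))
      (fun _ => mul_zero _)
  rw [← hnorm]
  exact hC.2 w hw (hammingNorm_ne_zero_iff.1 (hnorm ▸ hammingNorm_ne_zero_iff.2 hv0))

theorem not_isIsolated_map_of_isMonomial {ρ : (Fin n → K) ≃ₗ[K] (Fin n → K)}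
    (hρ : IsMonomial K n ρ) {C : Submodule K (Fin n → K)} (hC : ¬ IsIsolated K n t k C) :
    ¬ IsIsolated K n t k (C.map ρ.toLinearMap) := by
  simp only [IsIsolated, not_forall, not_not] at hC ⊢
  obtain ⟨D, hDC, hD⟩ := hC
  exact ⟨_, Submodule.map_mono hDC, goodCode_map_of_isMonomial hρ hD⟩

theorem goodCode_of_le {m m' : ℕ} {D X : Submodule K (Fin n → K)} (hD : goodCode K n t m D)
    (hDX : D ≤ X) (hX : Module.finrank K X = m') : goodCode K n t m' X :=
  ⟨hX, fun v hv => hD.2 v fun c hc => hv c (hDX hc)⟩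

theorem lambdaGraph_reachable_of_le_of_le {C X : {C // goodCode K n t k C}}
    {D : Submodule K (Fin n → K)} (hD : goodCode K n t (k - 1) D) (hDC : D ≤ C.1)
    (hDX : D ≤ X.1) :
    (lambdaGraph K n t k).Reachable C X := by
  by_cases hCX : C = X
  · exact hCX ▸ .refl C
  have hinf : C.1 ⊓ X.1 < C.1 := inf_lt_left.2 fun hle =>
    hCX (Subtype.ext (Submodule.eq_of_le_of_finrank_eq hle (C.2.1.trans X.2.1.symm)))
  have hlower := Submodule.finrank_mono (le_inf hDC hDX)
  have hupper := Submodule.finrank_lt_finrank_of_lt hinf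
  rw [hD.1] at hlower
  rw [C.2.1] at hupper
  exact SimpleGraph.Adj.reachable ⟨hCX, goodCode_of_le hD (le_inf hDC hDX) (by omega)⟩

theorem lambdaGraph_reachable_of_map_le {g : (Fin n → K) ≃ₗ[K] (Fin n → K)}
    (hg : IsMonomial K n g) {C X C' : {C // goodCode K n t k C}} {D : Submodule K (Fin n → K)}
    (hD : goodCode K n t (k - 1) D) (hDC : D ≤ C.1) (hDX : D ≤ X.1)
    (hgX : X.1.map g.toLinearMap ≤ X.1) (hC' : C'.1 = C.1.map g.toLinearMap) :
    (lambdaGraph K n t k).Reachable C C' :=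
  (lambdaGraph_reachable_of_le_of_le hD hDC hDX).trans <|
    lambdaGraph_reachable_of_le_of_le (goodCode_map_of_isMonomial hg hD)
      ((Submodule.map_mono hDX).trans hgX) (hC' ▸ Submodule.map_mono hDC)

theorem lambdaGraph_reachable_of_mem_elementaryMonomials (hk : 0 < k)
    {g : (Fin n → K) ≃ₗ[K] (Fin n → K)} (hg : g ∈ elementaryMonomials K n)
    {C C' : {C // goodCode K n t k C}} (hC : ¬ IsIsolated K n t k C.1)
    (hC' : C'.1 = C.1.map g.toLinearMap) : (lambdaGraph K n t k).Reachable C C' := by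
  obtain ⟨hg, u, hu⟩ := hg
  simp only [IsIsolated, not_forall, not_not] at hC
  obtain ⟨D, hDC, hD⟩ := hC
  have hmap : ∀ Y : Submodule K (Fin n → K), u ∈ Y → Y.map g.toLinearMap ≤ Y := by
    rintro Y huY _ ⟨v, hv, rfl⟩
    simpa using Y.add_mem hv ((Submodule.span_singleton_le_iff_mem u Y).2 huY (hu v))
  by_cases huC : u ∈ C.1
  · exact lambdaGraph_reachable_of_map_le (X := C) hg hD hDC hDC (hmap _ huC) hC'
  · have huD : u ∉ D := fun h => huC (hDC h)
    have hX : goodCode K n t k (D ⊔ K ∙ u) := goodCode_of_le hD le_sup_left <| by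
      rw [Submodule.finrank_sup_span_singleton huD, hD.1]; omega
    exact lambdaGraph_reachable_of_map_le (X := ⟨_, hX⟩) hg hD hDC le_sup_left
      (hmap _ (Submodule.mem_sup_right (Submodule.mem_span_singleton_self u))) hC'

theorem lambdaGraph_reachable_of_mem_closure (hk : 0 < k)
    {g : (Fin n → K) ≃ₗ[K] (Fin n → K)}
    (hg : g ∈ Submonoid.closure (elementaryMonomials K n))
    {C C' : {C // goodCode K n t k C}} (hC : ¬ IsIsolated K n t k C.1)
    (hC' : C'.1 = C.1.map g.toLinearMap) : (lambdaGraph K n t k).Reachable C C' := by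
  induction hg using Submonoid.closure_induction generalizing C C' with
  | mem g hg => exact lambdaGraph_reachable_of_mem_elementaryMonomials hk hg hC hC'
  | one =>
    obtain rfl : C' = C := Subtype.ext (hC'.trans (Submodule.map_id _))
    rfl
  | mul g h _ hh ihg ihh =>
    have hmono : IsMonomial K n h :=
      Submonoid.closure_le (S := monomialSubmonoid K n).2 (fun _ he => he.1) hh
    exact (ihh (C' := ⟨_, goodCode_map_of_isMonomial hmono C.2⟩) hC rfl).trans <|
      ihg (not_isIsolated_map_of_isMonomial hmono hC) (hC'.trans (Submodule.map_comp _ _ _))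

end Codes

theorem equivalent_nonisolated_reachable_lambda
    {n k t : ℕ} (hk : 0 < k)
    (C C' : Submodule F (Fin n → F)) (hC : goodCode F n t k C) (hC' : goodCode F n t k C')
    (hni : ¬ IsIsolated F n t k C)
    (ρ : (Fin n → F) ≃ₗ[F] (Fin n → F)) (hρ : IsMonomial F n ρ)
    (heq : C' = Submodule.map ρ.toLinearMap C) :
    (lambdaGraph F n t k).Reachable ⟨C, hC⟩ ⟨C', hC'⟩ :=
  lambdaGraph_reachable_of_mem_closure hk hρ.mem_closure_elementaryMonomials hni heq
end

section
/- The graph Δ_t(n,k−1) is connected if and only if the subgraph Λ̃_t(n,k) of Λ_t(n,k) induced on the non-isolated codes C_t(n,k) \ I_t(n,k) is connected (with the convention that the empty graph is connected). In particular, Λ_t(n,k) is the disjoint union of Λ̃_t(n,k) and the set I_t(n,k) of isolated vertices. -/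
open Finset

variable (F : Type) [Field F] [Fintype F] [DecidableEq F]

/-!
Every code of `C_t(n,k-1)` lies in a code of `C_t(n,k)`, since enlarging a code only shrinks its
dual. Two codes of `C_t(n,k-1)` inside a common `k`-dimensional code are equal or adjacent in `Δ`;
two codes of `C_t(n,k)` through a common code of `C_t(n,k-1)` are equal or adjacent in `Λ`; and the
sum of two `Δ`-adjacent codes lies in `C_t(n,k)`. So walks in `Δ_t(n,k-1)` and in `Λ̃_t(n,k)` can be
transported into each other.
-/

open Module

namespace Submodule

variable {K V : Type*} [DivisionRing K] [AddCommGroup V] [Module K V] [FiniteDimensional K V]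

theorem exists_le_finrank_eq (A : Submodule K V) {d : ℕ} (hAd : finrank K A ≤ d)
    (hd : d ≤ finrank K V) : ∃ X : Submodule K V, A ≤ X ∧ finrank K X = d := by
  induction d, hAd using Nat.le_induction with
  | base => exact ⟨A, le_rfl, rfl⟩
  | succ d _ ih =>
    obtain ⟨X, hAX, hX⟩ := ih (by omega)
    obtain ⟨v, -, hv⟩ := SetLike.exists_of_lt (lt_top_of_finrank_lt_finrank (s := X) (by omega))
    exact ⟨X ⊔ K ∙ v, hAX.trans le_sup_left, by rw [finrank_sup_span_singleton hv, hX]⟩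

theorem finrank_inf_lt_of_ne {A B : Submodule K V} (hAB : A ≠ B)
    (hfin : finrank K A = finrank K B) : finrank K ↥(A ⊓ B) < finrank K A := by
  refine finrank_lt_finrank_of_lt (inf_le_left.lt_of_ne fun h => hAB ?_)
  exact eq_of_le_of_finrank_eq (inf_eq_left.mp h) hfin

theorem inf_eq_of_finrank_le_add_one {X Y D : Submodule K V} (hXY : X ≠ Y)
    (hfin : finrank K X = finrank K Y) (hDX : D ≤ X) (hDY : D ≤ Y)
    (hX : finrank K X ≤ finrank K D + 1) : X ⊓ Y = D :=
  (eq_of_le_of_finrank_le (le_inf hDX hDY) (by have := finrank_inf_lt_of_ne hXY hfin; omega)).symm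

theorem finrank_inf_eq_sub_one_of_le {A B X : Submodule K V} (hAB : A ≠ B)
    (hfin : finrank K A = finrank K B) (hAX : A ≤ X) (hBX : B ≤ X)
    (hX : finrank K X ≤ finrank K A + 1) : finrank K ↥(A ⊓ B) = finrank K A - 1 := by
  have hlt := finrank_inf_lt_of_ne hAB hfin
  have hsup := finrank_mono (sup_le hAX hBX)
  have := finrank_sup_add_finrank_inf_eq A B
  omega

theorem finrank_sup_eq_add_one_of_finrank_inf {A B : Submodule K V} (hAB : A ≠ B)
    (hfin : finrank K A = finrank K B) (hinf : finrank K ↥(A ⊓ B) = finrank K A - 1) :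
    finrank K ↥(A ⊔ B) = finrank K A + 1 := by
  have hlt := finrank_inf_lt_of_ne hAB hfin
  have := finrank_sup_add_finrank_inf_eq A B
  omega

end Submodule

section Codes

variable {K : Type} [Field K] {n t k : ℕ}

theorem dualCode_anti {C D : Submodule K (Fin n → K)} (h : C ≤ D) :
    dualCode K n D ≤ dualCode K n C :=
  fun _ hv c hc => hv c (h hc)

variable [DecidableEq K]

variable (K) in
/-- The vertex set `C_t(n,k) \ I_t(n,k)` of `Λ̃_t(n,k)`. -/
def nonIsolatedCodes (n t k : ℕ) : Set {C : Submodule K (Fin n → K) // goodCode K n t k C} :=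
  {X | ¬ IsIsolated K n t k X.1}

variable (K) in
abbrev lambdaTildeGraph (n t k : ℕ) : SimpleGraph (nonIsolatedCodes K n t k) :=
  (lambdaGraph K n t k).induce (nonIsolatedCodes K n t k)

theorem goodCode.of_le {m m' : ℕ} {A X : Submodule K (Fin n → K)} (hA : goodCode K n t m A)
    (hAX : A ≤ X) (hX : finrank K X = m') : goodCode K n t m' X :=
  ⟨hX, fun v hv hv0 => hA.2 v (dualCode_anti hAX hv) hv0⟩

theorem goodCode.exists_le {m m' : ℕ} {A : Submodule K (Fin n → K)} (hA : goodCode K n t m A)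
    (hm : m ≤ m') (hm' : m' ≤ n) : ∃ X, goodCode K n t m' X ∧ A ≤ X := by
  obtain ⟨X, hAX, hX⟩ := A.exists_le_finrank_eq (d := m') (hA.1 ▸ hm)
    (by rwa [finrank_fin_fun])
  exact ⟨X, hA.of_le hAX hX, hAX⟩

theorem not_isIsolated_iff {X : Submodule K (Fin n → K)} :
    ¬ IsIsolated K n t k X ↔ ∃ D ≤ X, goodCode K n t (k-1) D := by
  simp [IsIsolated]

theorem goodCode_sup_of_deltaGraph_adj
    {A B : {C : Submodule K (Fin n → K) // goodCode K n t (k-1) C}}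
    (h : (deltaGraph K n t (k-1)).Adj A B) : goodCode K n t k (A.1 ⊔ B.1) := by
  obtain ⟨hAB, hinf⟩ := h
  have hAB' : A.1 ≠ B.1 := Subtype.coe_injective.ne hAB
  have hfin : finrank K A.1 = finrank K B.1 := A.2.1.trans B.2.1.symm
  have hlt := Submodule.finrank_inf_lt_of_ne hAB' hfin
  have hsup := Submodule.finrank_sup_eq_add_one_of_finrank_inf hAB' hfin (by rw [hinf, A.2.1])
  rw [A.2.1] at hlt hsup
  exact A.2.of_le le_sup_left (by omega)

theorem deltaGraph_reachable_of_le {X : Submodule K (Fin n → K)} (hX : goodCode K n t k X)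
    {A B : {C : Submodule K (Fin n → K) // goodCode K n t (k-1) C}}
    (hAX : A.1 ≤ X) (hBX : B.1 ≤ X) : (deltaGraph K n t (k-1)).Reachable A B := by
  rcases eq_or_ne A B with rfl | hAB
  · rfl
  refine SimpleGraph.Adj.reachable ⟨hAB, ?_⟩
  rw [Submodule.finrank_inf_eq_sub_one_of_le (Subtype.coe_injective.ne hAB)
    (A.2.1.trans B.2.1.symm) hAX hBX (by rw [hX.1, A.2.1]; omega), A.2.1]

theorem lambdaTildeGraph_reachable_of_le {D : Submodule K (Fin n → K)}
    (hD : goodCode K n t (k-1) D) {X Y : nonIsolatedCodes K n t k}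
    (hDX : D ≤ X.1.1) (hDY : D ≤ Y.1.1) : (lambdaTildeGraph K n t k).Reachable X Y := by
  rcases eq_or_ne X Y with rfl | hXY
  · rfl
  have hXY' : X.1.1 ≠ Y.1.1 := fun h => hXY (Subtype.ext (Subtype.ext h))
  refine SimpleGraph.Adj.reachable (show (lambdaGraph K n t k).Adj X.1 Y.1 from ⟨?_, ?_⟩)
  · exact Subtype.coe_injective.ne hXY
  rw [Submodule.inf_eq_of_finrank_le_add_one hXY' (X.1.2.1.trans Y.1.2.1.symm) hDX hDY
    (by rw [X.1.2.1, hD.1]; omega)]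
  exact hD

theorem lambdaTildeGraph_reachable_of_deltaGraph_reachable
    {A B : {C : Submodule K (Fin n → K) // goodCode K n t (k-1) C}}
    (h : (deltaGraph K n t (k-1)).Reachable A B) {X Y : nonIsolatedCodes K n t k}
    (hAX : A.1 ≤ X.1.1) (hBY : B.1 ≤ Y.1.1) : (lambdaTildeGraph K n t k).Reachable X Y := by
  obtain ⟨w⟩ := h
  induction w generalizing X with
  | @nil A => exact lambdaTildeGraph_reachable_of_le A.2 hAX hBY
  | @cons A E B hAE _ ih =>
    let Z : nonIsolatedCodes K n t k :=
      ⟨⟨A.1 ⊔ E.1, goodCode_sup_of_deltaGraph_adj hAE⟩,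
        not_isIsolated_iff.mpr ⟨A.1, le_sup_left, A.2⟩⟩
    exact (lambdaTildeGraph_reachable_of_le A.2 hAX (Y := Z) le_sup_left).trans
      (ih (X := Z) le_sup_right hBY)

theorem deltaGraph_reachable_of_lambdaTildeGraph_reachable {X Y : nonIsolatedCodes K n t k}
    (h : (lambdaTildeGraph K n t k).Reachable X Y)
    {A B : {C : Submodule K (Fin n → K) // goodCode K n t (k-1) C}}
    (hAX : A.1 ≤ X.1.1) (hBY : B.1 ≤ Y.1.1) : (deltaGraph K n t (k-1)).Reachable A B := by
  obtain ⟨w⟩ := h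
  induction w generalizing A with
  | @nil X => exact deltaGraph_reachable_of_le X.1.2 hAX hBY
  | @cons X Z Y hXZ _ ih =>
    let D : {C : Submodule K (Fin n → K) // goodCode K n t (k-1) C} := ⟨X.1.1 ⊓ Z.1.1, hXZ.2⟩
    exact (deltaGraph_reachable_of_le X.1.2 hAX (B := D) inf_le_left).trans
      (ih (A := D) inf_le_right hBY)

end Codes

theorem delta_connected_iff_lambdaTilde_connected
    {n k t : ℕ} (hkn : k < n) :
    ((deltaGraph F n t (k-1)).Preconnected ↔
      ((lambdaGraph F n t k).induce
        {X : {C : Submodule F (Fin n → F) // goodCode F n t k C} |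
          ¬ IsIsolated F n t k X.1}).Preconnected) ∧
    (∀ X Y : {C : Submodule F (Fin n → F) // goodCode F n t k C},
      IsIsolated F n t k X.1 → ¬ (lambdaGraph F n t k).Adj X Y) := by
  refine ⟨⟨fun hΔ X Y => ?_, fun hΛ A B => ?_⟩, fun X Y hX hXY => hX _ inf_le_left hXY.2⟩
  · obtain ⟨A, hAX, hA⟩ := not_isIsolated_iff.mp X.2
    obtain ⟨B, hBY, hB⟩ := not_isIsolated_iff.mp Y.2
    exact lambdaTildeGraph_reachable_of_deltaGraph_reachable (hΔ ⟨A, hA⟩ ⟨B, hB⟩) hAX hBY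
  · obtain ⟨X, hX, hAX⟩ := A.2.exists_le (k.sub_le 1) hkn.le
    obtain ⟨Y, hY, hBY⟩ := B.2.exists_le (k.sub_le 1) hkn.le
    exact deltaGraph_reachable_of_lambdaTildeGraph_reachable
      (hΛ ⟨⟨X, hX⟩, not_isIsolated_iff.mpr ⟨A.1, hAX, A.2⟩⟩
        ⟨⟨Y, hY⟩, not_isIsolated_iff.mpr ⟨B.1, hBY, B.2⟩⟩) hAX hBY
end
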